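/- Let h be a finite-dimensional quasi-toral Lie superalgebra with t = h_0, and λ ∈ t*. Then the quotient of the universal enveloping algebra U(h) by the ideal generated by {t − λ(t) : t ∈ t} is isomorphic as a superalgebra to the Clifford superalgebra Cl(h_1, B_λ), where B_λ(H1,H2) = λ([H1,H2]). -/

import Mathlib

/-- A complex Lie superalgebra, presented as a module with a ℤ/2-grading
(`even`/`odd` complementary submodules) and a bilinear bracket satisfying
super skew-symmetry and the super Jacobi identity (stated case by case on
homogeneous elements). -/
structure SuperLie (L : Type*) [AddCommGroup L] [Module ℂ L] where
  even : Submodule ℂ L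
  odd : Submodule ℂ L
  bracket : L →ₗ[ℂ] L →ₗ[ℂ] L
  compl : IsCompl even odd
  ee_mem : ∀ x ∈ even, ∀ y ∈ even, bracket x y ∈ even
  eo_mem : ∀ x ∈ even, ∀ y ∈ odd, bracket x y ∈ odd
  oe_mem : ∀ x ∈ odd, ∀ y ∈ even, bracket x y ∈ odd
  oo_mem : ∀ x ∈ odd, ∀ y ∈ odd, bracket x y ∈ even
  skew_e : ∀ x ∈ even, ∀ y : L, bracket x y = - bracket y x
  symm_oo : ∀ x ∈ odd, ∀ y ∈ odd, bracket x y = bracket y x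
  jacobi_e : ∀ x ∈ even, ∀ y z : L,
    bracket x (bracket y z) = bracket (bracket x y) z + bracket y (bracket x z)
  jacobi_oe : ∀ x ∈ odd, ∀ y ∈ even, ∀ z : L,
    bracket x (bracket y z) = bracket (bracket x y) z + bracket y (bracket x z)
  jacobi_oo : ∀ x ∈ odd, ∀ y ∈ odd, ∀ z : L,
    bracket x (bracket y z) = bracket (bracket x y) z - bracket y (bracket x z)

/-- The defining relations of `U(𝔥)/I(λ)U(𝔥)`: the universal enveloping superalgebra of a
Lie superalgebra `𝔥` is the tensor algebra modulo the super-commutator relations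
(`xy - yx = [x,y]` for `x` even, `xy + yx = [x,y]` for `x, y` odd), and we further impose
`t = λ(t)` for `t` in the even part (the ideal generated by `{t − λ(t) : t ∈ 𝔱}`). -/
inductive URel {H : Type*} [AddCommGroup H] [Module ℂ H]
    (h : SuperLie H) (lam : H →ₗ[ℂ] ℂ) :
    TensorAlgebra ℂ H → TensorAlgebra ℂ H → Prop
  | comm (x y : H) (hx : x ∈ h.even) :
      URel h lam (TensorAlgebra.ι ℂ x * TensorAlgebra.ι ℂ y)
        (TensorAlgebra.ι ℂ y * TensorAlgebra.ι ℂ x + TensorAlgebra.ι ℂ (h.bracket x y))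
  | anticomm (x y : H) (hx : x ∈ h.odd) (hy : y ∈ h.odd) :
      URel h lam (TensorAlgebra.ι ℂ x * TensorAlgebra.ι ℂ y)
        (-(TensorAlgebra.ι ℂ y * TensorAlgebra.ι ℂ x) + TensorAlgebra.ι ℂ (h.bracket x y))
  | central (t : H) (ht : t ∈ h.even) :
      URel h lam (TensorAlgebra.ι ℂ t) (algebraMap ℂ _ (lam t))

/-!
Because `𝔥₀` is central, imposing `t = λ(t)` turns every even generator into a scalar, so the
relations `[x, y] = xy - yx` with `x` even become vacuous and the only relations left are
`vw + wv = λ([v, w])` for odd `v, w`: the Clifford relations of the quadratic form whose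
polarization is `B_λ`. The universal properties of the quotient of the tensor algebra and of the
Clifford algebra then give mutually inverse algebra maps, which are checked on generators.
-/

namespace SuperLie

variable {H : Type*} [AddCommGroup H] [Module ℂ H] (h : SuperLie H) (lam : H →ₗ[ℂ] ℂ)

def quotientι : H →ₗ[ℂ] RingQuot (URel h lam) :=
  (RingQuot.mkAlgHom ℂ (URel h lam)).toLinearMap ∘ₗ TensorAlgebra.ι ℂ

lemma quotientι_apply (x : H) :
    h.quotientι lam x = RingQuot.mkAlgHom ℂ (URel h lam) (TensorAlgebra.ι ℂ x) :=
  rfl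

variable {h lam}

lemma quotientι_of_mem_even {x : H} (hx : x ∈ h.even) :
    h.quotientι lam x = algebraMap ℂ _ (lam x) :=
  (RingQuot.mkAlgHom_rel ℂ (URel.central x hx)).trans (AlgHom.commutes _ _)

lemma quotientι_mul_self_add_mul_self {v : H} (hv : v ∈ h.odd) :
    h.quotientι lam v * h.quotientι lam v + h.quotientι lam v * h.quotientι lam v =
      algebraMap ℂ _ (lam (h.bracket v v)) := by
  have hrel : h.quotientι lam v * h.quotientι lam v =
      -(h.quotientι lam v * h.quotientι lam v) + h.quotientι lam (h.bracket v v) := by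
    simpa only [quotientι_apply, map_mul, map_add, map_neg] using
      RingQuot.mkAlgHom_rel ℂ (URel.anticomm (lam := lam) v v hv hv)
  rw [← quotientι_of_mem_even (h.oo_mem v hv v hv)]
  exact eq_neg_add_iff_add_eq.mp hrel

variable {Q : QuadraticForm ℂ h.odd}

lemma quotientι_mul_self
    (hQ : ∀ v w : h.odd, QuadraticMap.polar Q v w = lam (h.bracket v w)) (v : h.odd) :
    h.quotientι lam v * h.quotientι lam v = algebraMap ℂ _ (Q v) := by
  refine smul_right_injective _ (two_ne_zero (α := ℂ)) ?_
  calc (2 : ℂ) • (h.quotientι lam v * h.quotientι lam v)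
      = algebraMap ℂ _ (lam (h.bracket v v)) := by
        rw [two_smul, quotientι_mul_self_add_mul_self v.2]
    _ = (2 : ℂ) • algebraMap ℂ _ (Q v) := by
        rw [← hQ, QuadraticMap.polar_self, two_nsmul, map_add, two_smul]

variable (lam Q) in
noncomputable def toCliffordLinear : H →ₗ[ℂ] CliffordAlgebra Q :=
  LinearMap.ofIsCompl h.compl (Algebra.linearMap ℂ _ ∘ₗ lam ∘ₗ h.even.subtype)
    (CliffordAlgebra.ι Q)

@[simp]
lemma toCliffordLinear_apply_even (x : h.even) :
    toCliffordLinear lam Q x = algebraMap ℂ _ (lam x) :=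
  LinearMap.ofIsCompl_apply_left _ x

@[simp]
lemma toCliffordLinear_apply_odd (v : h.odd) :
    toCliffordLinear lam Q v = CliffordAlgebra.ι Q v :=
  LinearMap.ofIsCompl_apply_right _ v

lemma lift_toCliffordLinear_eq_of_uRel
    (quasitoral : ∀ x ∈ h.even, ∀ y : H, h.bracket x y = 0)
    (hQ : ∀ v w : h.odd, QuadraticMap.polar Q v w = lam (h.bracket v w))
    ⦃a b : TensorAlgebra ℂ H⦄ (hab : URel h lam a b) :
    TensorAlgebra.lift ℂ (toCliffordLinear lam Q) a =
      TensorAlgebra.lift ℂ (toCliffordLinear lam Q) b := by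
  cases hab with
  | comm x y hx =>
    simp only [map_mul, TensorAlgebra.lift_ι_apply, quasitoral x hx y, map_zero,
      add_zero, toCliffordLinear_apply_even ⟨x, hx⟩]
    exact Algebra.commutes _ _
  | anticomm x y hx hy =>
    simp only [map_mul, map_add, map_neg, TensorAlgebra.lift_ι_apply,
      toCliffordLinear_apply_odd ⟨x, hx⟩, toCliffordLinear_apply_odd ⟨y, hy⟩,
      toCliffordLinear_apply_even ⟨_, h.oo_mem x hx y hy⟩]
    rw [neg_add_eq_sub, eq_sub_iff_add_eq, ← hQ ⟨x, hx⟩ ⟨y, hy⟩]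
    exact CliffordAlgebra.ι_mul_ι_add_swap _ _
  | central t ht =>
    simp [toCliffordLinear_apply_even ⟨t, ht⟩]

variable (quasitoral : ∀ x ∈ h.even, ∀ y : H, h.bracket x y = 0)
  (hQ : ∀ v w : h.odd, QuadraticMap.polar Q v w = lam (h.bracket v w))

noncomputable def toClifford : RingQuot (URel h lam) →ₐ[ℂ] CliffordAlgebra Q :=
  RingQuot.liftAlgHom ℂ ⟨_, lift_toCliffordLinear_eq_of_uRel quasitoral hQ⟩

@[simp]
lemma toClifford_quotientι (x : H) :
    toClifford quasitoral hQ (h.quotientι lam x) = toCliffordLinear lam Q x :=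
  (RingQuot.liftAlgHom_mkAlgHom_apply _ _ _ _).trans (TensorAlgebra.lift_ι_apply _ _)

noncomputable def ofClifford : CliffordAlgebra Q →ₐ[ℂ] RingQuot (URel h lam) :=
  CliffordAlgebra.lift Q ⟨h.quotientι lam ∘ₗ h.odd.subtype, quotientι_mul_self hQ⟩

@[simp]
lemma ofClifford_ι (v : h.odd) : ofClifford hQ (CliffordAlgebra.ι Q v) = h.quotientι lam v :=
  CliffordAlgebra.lift_ι_apply _ _ _

lemma toClifford_comp_ofClifford :
    (toClifford quasitoral hQ).comp (ofClifford hQ) = AlgHom.id ℂ _ :=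
  CliffordAlgebra.hom_ext <| LinearMap.ext fun v => by simp

lemma ofClifford_comp_toClifford :
    (ofClifford hQ).comp (toClifford quasitoral hQ) = AlgHom.id ℂ _ := by
  refine RingQuot.ringQuot_ext' _ _ _ <| TensorAlgebra.hom_ext <|
    LinearMap.ext_on_codisjoint h.compl.codisjoint (fun x hx => ?_) (fun v hv => ?_)
  · change ofClifford hQ (toClifford quasitoral hQ (h.quotientι lam x)) = h.quotientι lam x
    rw [toClifford_quotientι, toCliffordLinear_apply_even ⟨x, hx⟩, AlgHom.commutes,
      quotientι_of_mem_even hx]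
  · change ofClifford hQ (toClifford quasitoral hQ (h.quotientι lam v)) = h.quotientι lam v
    rw [toClifford_quotientι, toCliffordLinear_apply_odd ⟨v, hv⟩, ofClifford_ι]

noncomputable def cliffordEquiv : RingQuot (URel h lam) ≃ₐ[ℂ] CliffordAlgebra Q :=
  AlgEquiv.ofAlgHom _ _ (toClifford_comp_ofClifford quasitoral hQ)
    (ofClifford_comp_toClifford quasitoral hQ)

@[simp]
lemma cliffordEquiv_quotientι (v : h.odd) :
    cliffordEquiv quasitoral hQ (h.quotientι lam v) = CliffordAlgebra.ι Q v := by
  simp [cliffordEquiv]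

end SuperLie

theorem enveloping_quotient_iso_clifford
    {H : Type} [AddCommGroup H] [Module ℂ H]
    (h : SuperLie H)
    (quasitoral : ∀ x ∈ h.even, ∀ y : H, h.bracket x y = 0)
    (lam : H →ₗ[ℂ] ℂ)
    (Qlam : QuadraticForm ℂ ↥h.odd)
    (hQlam : ∀ v w : ↥h.odd,
      QuadraticMap.polar Qlam v w = lam (h.bracket (v : H) (w : H))) :
    ∃ eqv : RingQuot (URel h lam) ≃ₐ[ℂ] CliffordAlgebra Qlam,
      ∀ v : ↥h.odd,
        eqv (RingQuot.mkAlgHom ℂ (URel h lam) (TensorAlgebra.ι ℂ (v : H))) =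
          CliffordAlgebra.ι Qlam v :=
  ⟨SuperLie.cliffordEquiv quasitoral hQlam, SuperLie.cliffordEquiv_quotientι quasitoral hQlam⟩
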